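/- For every t ∈ {1,…,T−1}, the rank vector R_t is independent of the next aggregated parameter vector w_{t+1}. -/

import Mathlib

open MeasureTheory ProbabilityTheory Matrix
open scoped ENNReal NNReal

/-- The rank vector of a tuple of reals: `rankVec r k = #{j : r j ≤ r k}`.
When the entries are pairwise distinct this is a permutation of `{1, …, N}`. -/
noncomputable def rankVec {N : ℕ} (r : Fin N → ℝ) : Fin N → ℕ :=
  fun k => (Finset.univ.filter fun j => r j ≤ r k).card

/-- The residual `‖Δ − B(BᵀΔ)‖₂` of a vector `Δ ∈ ℝ^p` with respect to the column
space of the `p × q` matrix `B`, in the Euclidean (ℓ²) norm. -/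
noncomputable def resid {p q : ℕ} (B : Matrix (Fin p) (Fin q) ℝ)
    (Δ : EuclideanSpace ℝ (Fin p)) : ℝ :=
  ‖Δ - (WithLp.equiv 2 (Fin p → ℝ)).symm
      (B.mulVec (Bᵀ.mulVec (WithLp.equiv 2 (Fin p → ℝ) Δ)))‖

section RankVecAux

lemma rankVec_comp_perm {N : ℕ} (r : Fin N → ℝ) (σ : Equiv.Perm (Fin N)) :
    rankVec (fun k => r (σ k)) = fun k => rankVec r (σ k) := by
  funext k
  unfold rankVec
  exact Finset.card_equiv σ (by simp)

lemma rankVec_lt {N : ℕ} (r : Fin N → ℝ) {k k' : Fin N} (h : r k < r k') :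
    rankVec r k < rankVec r k' := by
  apply Finset.card_lt_card
  constructor
  · intro j hj
    simp only [Finset.mem_filter, Finset.mem_univ, true_and] at *
    exact hj.trans h.le
  · intro hsub
    have := hsub (Finset.mem_filter.2 ⟨Finset.mem_univ k', le_refl _⟩)
    simp only [Finset.mem_filter, Finset.mem_univ, true_and] at this
    exact absurd this (not_le.2 h)

lemma rankVec_injective {N : ℕ} {r : Fin N → ℝ} (hr : Function.Injective r) :
    Function.Injective (rankVec r) := by
  intro k k' h
  by_contra hkk
  rcases lt_or_gt_of_ne (fun hrkk => hkk (hr hrkk)) with hlt | hlt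
  · exact absurd h (rankVec_lt r hlt).ne
  · exact absurd h.symm (rankVec_lt r hlt).ne

lemma rankVec_pos {N : ℕ} (r : Fin N → ℝ) (k : Fin N) : 1 ≤ rankVec r k :=
  Finset.card_pos.2 ⟨k, Finset.mem_filter.2 ⟨Finset.mem_univ k, le_refl _⟩⟩

lemma rankVec_le {N : ℕ} (r : Fin N → ℝ) (k : Fin N) : rankVec r k ≤ N := by
  simpa [rankVec] using (Finset.card_filter_le Finset.univ fun j => r j ≤ r k)

lemma exists_perm_rankVec {N : ℕ} {r : Fin N → ℝ} (hr : Function.Injective r) :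
    ∃ e : Equiv.Perm (Fin N), ∀ k, rankVec r k = (e k).val + 1 := by
  have h1 : ∀ k, 1 ≤ rankVec r k := rankVec_pos r
  have h2 : ∀ k, rankVec r k ≤ N := rankVec_le r
  set f : Fin N → Fin N := fun k => ⟨rankVec r k - 1, by have := h1 k; have := h2 k; omega⟩
  have hfinj : Function.Injective f := by
    intro k k' h
    apply rankVec_injective hr
    simp only [f, Fin.mk.injEq] at h
    have := h1 k; have := h1 k'
    omega
  refine ⟨Equiv.ofBijective f ((Finite.injective_iff_bijective).1 hfinj), fun k => ?_⟩
  show rankVec r k = (f k).val + 1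
  simp only [f]
  have := h1 k
  omega

lemma measurable_rankVec {N : ℕ} : Measurable (rankVec (N := N)) := by
  apply measurable_pi_lambda
  intro k
  have : (fun r : Fin N → ℝ => rankVec r k)
      = fun r => ∑ j : Fin N, if r j ≤ r k then 1 else 0 := by
    funext r
    simpa [rankVec] using Finset.card_filter (fun j => r j ≤ r k) Finset.univ
  rw [this]
  exact Finset.measurable_sum _ fun j _ =>
    Measurable.ite (measurableSet_le (measurable_pi_apply j) (measurable_pi_apply k))
      measurable_const measurable_const

end RankVecAux

section AggIterAux

variable {p T K : ℕ} {𝓧 : Type*}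

/-- Deterministic iteration of the aggregation recursion, as a function of the initial
point and the whole data array. -/
noncomputable def aggIter (F : EuclideanSpace ℝ (Fin p) → 𝓧 → EuclideanSpace ℝ (Fin p)) :
    ℕ → EuclideanSpace ℝ (Fin p) × (Fin T × Fin K → 𝓧) → EuclideanSpace ℝ (Fin p)
  | 0 => fun v => v.1
  | (n + 1) => fun v =>
      if h : n < T then
        (K : ℝ)⁻¹ • ∑ k : Fin K, F (aggIter F n v) (v.2 (⟨n, h⟩, k))
      else aggIter F n v

lemma aggIter_congr (F : EuclideanSpace ℝ (Fin p) → 𝓧 → EuclideanSpace ℝ (Fin p))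
    (n : ℕ) (v v' : EuclideanSpace ℝ (Fin p) × (Fin T × Fin K → 𝓧))
    (h1 : v.1 = v'.1) (h2 : ∀ (s : Fin T) (k : Fin K), s.val < n → v.2 (s, k) = v'.2 (s, k)) :
    aggIter F n v = aggIter F n v' := by
  induction n with
  | zero => exact h1
  | succ n ih =>
    have hih : aggIter F n v = aggIter F n v' :=
      ih fun s k hs => h2 s k (hs.trans (Nat.lt_succ_self n))
    show dite _ _ _ = dite _ _ _
    split
    · next h =>
      rw [hih]
      congr 1
      refine Finset.sum_congr rfl fun k _ => ?_
      rw [h2 ⟨n, h⟩ k (Nat.lt_succ_self n)]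
    · exact hih

lemma measurable_aggIter [MeasurableSpace 𝓧]
    {F : EuclideanSpace ℝ (Fin p) → 𝓧 → EuclideanSpace ℝ (Fin p)}
    (hF : Measurable (Function.uncurry F)) (n : ℕ) :
    Measurable (aggIter (T := T) (K := K) F n) := by
  induction n with
  | zero => exact measurable_fst
  | succ n ih =>
    show Measurable fun v => dite _ _ _
    by_cases h : n < T
    · simp only [dif_pos h]
      exact (Finset.measurable_sum (Finset.univ : Finset (Fin K)) fun k _ =>
        hF.comp (ih.prodMk ((measurable_pi_apply _).comp measurable_snd))).const_smul ((K : ℝ)⁻¹)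
    · simpa only [dif_neg h] using ih

end AggIterAux

/-- For every `t ∈ {1,…,T−1}`, the rank vector `R_t` is independent of the next
aggregated parameter vector `w_{t+1}`. -/
theorem rank_vector_indep_next_params
    {Ω : Type*} [MeasurableSpace Ω] (P : Measure Ω) [IsProbabilityMeasure P]
    {𝓧 : Type*} [MeasurableSpace 𝓧]
    (T K p q : ℕ) (hK : 1 ≤ K) (hp : 1 ≤ p)
    (D : Fin T → Fin K → Ω → 𝓧) (hD : ∀ t k, Measurable (D t k))
    (w : ℕ → Ω → EuclideanSpace ℝ (Fin p)) (hw0 : Measurable (w 0))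
    (F : EuclideanSpace ℝ (Fin p) → 𝓧 → EuclideanSpace ℝ (Fin p))
    (hF : Measurable (Function.uncurry F))
    -- the recursion w_{t+1} = (1/K) Σ_k F(w_t, D_{t,k})
    (hrec : ∀ t : Fin T, w (t.val + 1)
      = fun ω => (K : ℝ)⁻¹ • ∑ k : Fin K, F (w t.val ω) (D t k ω))
    -- the family {D_{t,k}} together with w₁ is an independent family
    (hIndep : iIndep (fun i : Option (Fin T × Fin K) =>
      i.elim (MeasurableSpace.comap (w 0) inferInstance)
        fun tk => MeasurableSpace.comap (D tk.1 tk.2) inferInstance) P)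
    -- the D_{t,k} are identically distributed
    (hId : ∀ (t t' : Fin T) (k k' : Fin K), IdentDistrib (D t k) (D t' k') P P)
    (B : Matrix (Fin p) (Fin q) ℝ)
    -- almost surely, for every t, the residuals r_t^(1),…,r_t^(K) are pairwise distinct
    (hdist : ∀ᵐ ω ∂P, ∀ t : Fin T,
      Function.Injective fun k : Fin K => resid B (F (w t.val ω) (D t k ω) - w t.val ω)) :
    ∀ t : Fin T, t.val + 1 < T →
      IndepFun (fun ω => rankVec fun k => resid B (F (w t.val ω) (D t k ω) - w t.val ω))
        (w (t.val + 1)) P := by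
  classical
  intro t ht
  -- the data array
  set Y : Ω → (Fin T × Fin K) → 𝓧 := fun ω tk => D tk.1 tk.2 ω with hYdef
  have hYmeas : Measurable Y := measurable_pi_lambda _ fun tk => hD tk.1 tk.2
  -- joint random element
  set V : Ω → EuclideanSpace ℝ (Fin p) × ((Fin T × Fin K) → 𝓧) := fun ω => (w 0 ω, Y ω)
    with hVdef
  have hVmeas : Measurable V := hw0.prodMk hYmeas
  -- the common law of the data
  set μ₀ : Measure 𝓧 := P.map (D t ⟨0, hK⟩) with hμ₀def
  haveI : IsProbabilityMeasure μ₀ := Measure.isProbabilityMeasure_map (hD t ⟨0, hK⟩).aemeasurable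
  have hμ₀ : ∀ (s : Fin T) (k : Fin K), P.map (D s k) = μ₀ := fun s k =>
    (hId s t k ⟨0, hK⟩).map_eq
  -- the law of the data array is the product measure
  have lawY : Measure.pi (fun _ : Fin T × Fin K => μ₀) = P.map Y := by
    refine Measure.pi_eq fun s hs => ?_
    rw [Measure.map_apply hYmeas (MeasurableSet.univ_pi hs)]
    set g : Option (Fin T × Fin K) → Set Ω :=
      fun i => Option.elim i Set.univ (fun tk => D tk.1 tk.2 ⁻¹' s tk) with hgdef
    have hpre : Y ⁻¹' Set.pi Set.univ s
        = ⋂ i ∈ Finset.univ.image (Option.some (α := Fin T × Fin K)), g i := by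
      ext ω
      simp only [Set.mem_preimage, Set.mem_pi, Set.mem_univ, true_implies, Set.mem_iInter,
        Finset.mem_image, Finset.mem_univ, true_and]
      constructor
      · rintro h i ⟨tk, rfl⟩
        exact h tk
      · intro h tk
        exact h (some tk) ⟨tk, rfl⟩
    rw [hpre, hIndep.meas_biInter (S := Finset.univ.image (Option.some (α := Fin T × Fin K)))
      (s := g) ?_]
    · rw [Finset.prod_image (fun a _ b _ h => Option.some_injective _ h)]
      refine Finset.prod_congr rfl fun tk _ => ?_
      show P (D tk.1 tk.2 ⁻¹' s tk) = μ₀ (s tk)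
      rw [← hμ₀ tk.1 tk.2, Measure.map_apply (hD tk.1 tk.2) (hs tk)]
    · rintro (_ | tk) hi
      · simp at hi
      · exact ⟨s tk, hs tk, rfl⟩
  -- `w 0` is independent of the data array
  have hXY : IndepFun (w 0) Y P := by
    have h_le : ∀ i : Option (Fin T × Fin K),
        (Option.elim i (MeasurableSpace.comap (w 0) inferInstance)
          fun tk => MeasurableSpace.comap (D tk.1 tk.2) inferInstance)
          ≤ (inferInstance : MeasurableSpace Ω) := by
      rintro (_ | tk)
      · exact hw0.comap_le
      · exact (hD tk.1 tk.2).comap_le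
    have hsup := indep_iSup_of_disjoint h_le hIndep
      (S := {none}) (T := Set.range (Option.some (α := Fin T × Fin K)))
      (by
        rw [Set.disjoint_left]
        rintro x hx ⟨tk, rfl⟩
        simp at hx)
    have h1 : MeasurableSpace.comap (w 0) inferInstance
        ≤ ⨆ i ∈ ({none} : Set (Option (Fin T × Fin K))),
          (Option.elim i (MeasurableSpace.comap (w 0) inferInstance)
            fun tk => MeasurableSpace.comap (D tk.1 tk.2) inferInstance) := by
      rw [iSup_singleton]
      exact le_rfl
    have h2 : MeasurableSpace.comap Y inferInstance
        ≤ ⨆ i ∈ Set.range (Option.some (α := Fin T × Fin K)),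
          (Option.elim i (MeasurableSpace.comap (w 0) inferInstance)
            fun tk => MeasurableSpace.comap (D tk.1 tk.2) inferInstance) := by
      have hpi : (inferInstance : MeasurableSpace ((Fin T × Fin K) → 𝓧))
          = ⨆ tk : Fin T × Fin K,
            (inferInstance : MeasurableSpace 𝓧).comap fun y : (Fin T × Fin K) → 𝓧 => y tk :=
        rfl
      rw [hpi, MeasurableSpace.comap_iSup]
      refine iSup_le fun tk => ?_
      rw [MeasurableSpace.comap_comp]
      exact le_iSup₂_of_le (some tk) ⟨tk, rfl⟩ le_rfl
    exact indep_of_indep_of_le_right (indep_of_indep_of_le_left hsup h1) h2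
  -- the law of the joint random element
  have lawV : P.map V = (P.map (w 0)).prod (Measure.pi (fun _ : Fin T × Fin K => μ₀)) := by
    rw [lawY]
    exact (indepFun_iff_map_prod_eq_prod_map_map hw0.aemeasurable hYmeas.aemeasurable).1 hXY
  -- `w n` is a function of `V`
  have hw_eq : ∀ n, n ≤ T → w n = fun ω => aggIter (T := T) (K := K) F n (V ω) := by
    intro n
    induction n with
    | zero => intro _; rfl
    | succ n ih =>
      intro hn
      have hnT : n < T := hn
      funext ω
      rw [hrec ⟨n, hnT⟩]
      show _ = aggIter F (n + 1) (V ω)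
      have : aggIter (T := T) (K := K) F (n + 1) (V ω)
          = (K : ℝ)⁻¹ • ∑ k : Fin K, F (aggIter F n (V ω)) ((V ω).2 (⟨n, hnT⟩, k)) := by
        show dite _ _ _ = _
        rw [dif_pos hnT]
      rw [this, ← congrFun (ih (Nat.le_of_succ_le hn)) ω]
  have hwmeas : ∀ n, n ≤ T → Measurable (w n) := by
    intro n hn
    rw [hw_eq n hn]
    exact (measurable_aggIter hF n).comp hVmeas
  -- residual map is measurable
  have hresid : Measurable (resid B) := by
    have hc1 : Continuous fun x : Fin p → ℝ => Bᵀ.mulVec x := by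
      refine continuous_pi fun i => ?_
      simp only [Matrix.mulVec, dotProduct]
      exact continuous_finset_sum _ fun j _ => continuous_const.mul (continuous_apply j)
    have hc2 : Continuous fun x : Fin q → ℝ => B.mulVec x := by
      refine continuous_pi fun i => ?_
      simp only [Matrix.mulVec, dotProduct]
      exact continuous_finset_sum _ fun j _ => continuous_const.mul (continuous_apply j)
    have : Continuous (resid B) := by
      unfold resid
      exact (continuous_id.sub ((PiLp.continuous_toLp (p := 2) (β := fun _ : Fin p => ℝ)).comp
        ((hc2.comp hc1).comp (PiLp.continuous_ofLp (p := 2) (β := fun _ : Fin p => ℝ))))).norm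
    exact this.measurable
  -- abbreviations for the two random elements in the statement
  set R : Ω → (Fin K → ℕ) :=
    fun ω => rankVec fun k => resid B (F (w t.val ω) (D t k ω) - w t.val ω) with hRdef
  set S : Ω → EuclideanSpace ℝ (Fin p) := w (t.val + 1) with hSdef
  -- the deterministic counterpart
  set Φ : EuclideanSpace ℝ (Fin p) × ((Fin T × Fin K) → 𝓧) → (Fin K → ℕ) × EuclideanSpace ℝ (Fin p) := fun v =>
    ((rankVec fun k => resid B (F (aggIter F t.val v) (v.2 (t, k)) - aggIter F t.val v)),
      (K : ℝ)⁻¹ • ∑ k : Fin K, F (aggIter F t.val v) (v.2 (t, k))) with hΦdef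
  have hgmeas : Measurable (aggIter (T := T) (K := K) F t.val) := measurable_aggIter hF t.val
  have hΦmeas : Measurable Φ := by
    refine Measurable.prodMk ?_ ?_
    · exact measurable_rankVec.comp (measurable_pi_lambda _ fun k =>
        hresid.comp ((hF.comp (hgmeas.prodMk
          ((measurable_pi_apply _).comp measurable_snd))).sub hgmeas))
    · exact (Finset.measurable_sum (Finset.univ : Finset (Fin K)) fun k _ =>
        hF.comp (hgmeas.prodMk ((measurable_pi_apply _).comp measurable_snd))).const_smul ((K : ℝ)⁻¹)
  have hReq : R = fun ω => (Φ (V ω)).1 := by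
    funext ω
    show rankVec _ = _
    rw [congrFun (hw_eq t.val (le_of_lt t.isLt)) ω]
  have hSeq : S = fun ω => (Φ (V ω)).2 := by
    funext ω
    have h1 : w (t.val + 1) ω = (K : ℝ)⁻¹ • ∑ k : Fin K, F (w t.val ω) (D t k ω) :=
      congrFun (hrec t) ω
    show w (t.val + 1) ω = _
    rw [h1, congrFun (hw_eq t.val (le_of_lt t.isLt)) ω]
  have hRmeas : Measurable R := by
    rw [hReq]; exact measurable_fst.comp (hΦmeas.comp hVmeas)
  have hSmeas : Measurable S := hwmeas (t.val + 1) ht.le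
  have hkeyset : ∀ (s : Set (Fin K → ℕ)) (A : Set (EuclideanSpace ℝ (Fin p))),
      R ⁻¹' s ∩ S ⁻¹' A = V ⁻¹' (Φ ⁻¹' (s ×ˢ A)) := by
    intro s A
    ext ω
    simp only [Set.mem_inter_iff, Set.mem_preimage, Set.mem_prod, hReq, hSeq]
  -- the exchangeability argument
  have hq : ∀ (A : Set (EuclideanSpace ℝ (Fin p))), MeasurableSet A → ∀ (ρ : Fin K → ℕ) (σ : Equiv.Perm (Fin K)),
      P (R ⁻¹' {fun k => ρ (σ k)} ∩ S ⁻¹' A) = P (R ⁻¹' {ρ} ∩ S ⁻¹' A) := by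
    intro A hA ρ σ
    -- the index permutation acting on the data array
    set τ : (Fin T × Fin K) ≃ (Fin T × Fin K) :=
      Equiv.prodShear (Equiv.refl (Fin T))
        (fun s => if s = t then σ else Equiv.refl (Fin K)) with hτdef
    have hτ_t : ∀ k, τ (t, k) = (t, σ k) := by
      intro k; simp [hτdef, Equiv.prodShear]
    have hτ_ne : ∀ (s : Fin T) (k : Fin K), s ≠ t → τ (s, k) = (s, k) := by
      intro s k hs; simp [hτdef, Equiv.prodShear, hs]
    set Ψ : EuclideanSpace ℝ (Fin p) × ((Fin T × Fin K) → 𝓧) → EuclideanSpace ℝ (Fin p) × ((Fin T × Fin K) → 𝓧) :=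
      fun v => (v.1, fun i => v.2 (τ i)) with hΨdef
    have hΨmeas : Measurable Ψ :=
      measurable_fst.prodMk
        (measurable_pi_lambda _ fun i => (measurable_pi_apply _).comp measurable_snd)
    -- the product law is invariant under Ψ
    have hpi_inv : MeasurePreserving (fun y : (Fin T × Fin K) → 𝓧 => fun i => y (τ i))
        (Measure.pi (fun _ : Fin T × Fin K => μ₀))
        (Measure.pi (fun _ : Fin T × Fin K => μ₀)) := by
      have h := measurePreserving_piCongrLeft (fun _ : Fin T × Fin K => μ₀) τ.symm
      have heq : ⇑(MeasurableEquiv.piCongrLeft (fun _ : Fin T × Fin K => 𝓧) τ.symm)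
          = fun y : (Fin T × Fin K) → 𝓧 => fun i => y (τ i) := by
        funext y j
        have h1 : (Equiv.piCongrLeft (fun _ : Fin T × Fin K => 𝓧) τ.symm) y (τ.symm (τ j))
            = y (τ j) := Equiv.piCongrLeft_apply_apply _ _ _ _
        rw [Equiv.symm_apply_apply] at h1
        exact h1
      rw [heq] at h
      exact h
    have hVinv : (P.map V).map Ψ = P.map V := by
      rw [lawV]
      have : Ψ = Prod.map (id : EuclideanSpace ℝ (Fin p) → EuclideanSpace ℝ (Fin p)) (fun y : (Fin T × Fin K) → 𝓧 => fun i => y (τ i)) := by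
        funext v; cases v; rfl
      rw [this]
      exact ((MeasurePreserving.id _).prod hpi_inv).map_eq
    -- commutation of Φ with Ψ
    have hcomm : ∀ v, Φ (Ψ v) = ((fun k => (Φ v).1 (σ k)), (Φ v).2) := by
      intro v
      have hg : aggIter (T := T) (K := K) F t.val (Ψ v) = aggIter F t.val v := by
        refine aggIter_congr F t.val _ _ rfl fun s k hs => ?_
        show v.2 (τ (s, k)) = v.2 (s, k)
        rw [hτ_ne s k (by intro h; rw [h] at hs; exact lt_irrefl _ hs)]
      have heval : ∀ k, (Ψ v).2 (t, k) = v.2 (t, σ k) := by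
        intro k; show v.2 (τ (t, k)) = _; rw [hτ_t]
      refine Prod.ext ?_ ?_
      · show rankVec _ = _
        have hr'' : (fun k => resid B (F (aggIter F t.val (Ψ v)) ((Ψ v).2 (t, k))
            - aggIter F t.val (Ψ v)))
            = fun k => resid B (F (aggIter F t.val v) (v.2 (t, σ k)) - aggIter F t.val v) := by
          funext k; rw [hg, heval]
        exact (congrArg rankVec hr'').trans (rankVec_comp_perm
          (fun k' => resid B (F (aggIter F t.val v) (v.2 (t, k')) - aggIter F t.val v)) σ)
      · show (K : ℝ)⁻¹ • _ = (K : ℝ)⁻¹ • _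
        congr 1
        rw [show (∑ k : Fin K, F (aggIter F t.val (Ψ v)) ((Ψ v).2 (t, k)))
            = ∑ k : Fin K, F (aggIter F t.val v) (v.2 (t, σ k)) by
          refine Finset.sum_congr rfl fun k _ => by rw [hg, heval]]
        exact Equiv.sum_comp σ (fun k => F (aggIter F t.val v) (v.2 (t, k)))
    -- put everything together
    have hmset : ∀ ρ' : Fin K → ℕ, MeasurableSet (Φ ⁻¹' ({ρ'} ×ˢ A)) := fun ρ' =>
      hΦmeas ((measurableSet_singleton ρ').prod hA)
    rw [hkeyset, hkeyset, ← Measure.map_apply hVmeas (hmset _),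
      ← Measure.map_apply hVmeas (hmset _)]
    conv_lhs => rw [← hVinv]
    rw [Measure.map_apply hΨmeas (hmset _)]
    congr 1
    ext v
    simp only [Set.mem_preimage, hcomm v, Set.mem_prod, Set.mem_singleton_iff]
    constructor
    · rintro ⟨h1, h2⟩
      refine ⟨funext fun k => ?_, h2⟩
      have := congrFun h1 (σ.symm k)
      simpa using this
    · rintro ⟨h1, h2⟩
      exact ⟨funext fun k => congrFun h1 (σ k), h2⟩
  -- almost surely the ranks form a permutation
  have hbad : P {ω | ¬ Function.Injective
      fun k : Fin K => resid B (F (w t.val ω) (D t k ω) - w t.val ω)} = 0 := by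
    refine measure_mono_null ?_ (ae_iff.mp hdist)
    intro ω hω hcon
    exact hω (hcon t)
  have hρinj : Function.Injective
      (fun σ : Equiv.Perm (Fin K) => (fun k => (σ k).val + 1 : Fin K → ℕ)) := by
    intro σ σ' h
    ext k
    have := congrFun h k
    simp only [Nat.add_right_cancel_iff] at this
    exact this
  -- the factorial-counting identity
  have hcount : ∀ (A : Set (EuclideanSpace ℝ (Fin p))), MeasurableSet A →
      P (S ⁻¹' A) = (Fintype.card (Equiv.Perm (Fin K)) : ℝ≥0∞)
        * P (R ⁻¹' {fun k : Fin K => (k : ℕ) + 1} ∩ S ⁻¹' A) := by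
    intro A hA
    set U : Set Ω := ⋃ σ : Equiv.Perm (Fin K), R ⁻¹' {fun k => (σ k).val + 1} with hUdef
    have hUc : P Uᶜ = 0 := by
      refine measure_mono_null ?_ hbad
      intro ω hω
      intro hcon
      obtain ⟨e, he⟩ := exists_perm_rankVec hcon
      exact hω (Set.mem_iUnion.2 ⟨e, by exact funext he⟩)
    have hSU : S ⁻¹' A ∩ U = ⋃ σ : Equiv.Perm (Fin K),
        (R ⁻¹' {fun k => (σ k).val + 1} ∩ S ⁻¹' A) := by
      rw [hUdef, Set.inter_iUnion]
      exact Set.iUnion_congr fun σ => Set.inter_comm _ _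
    have hdisj : Pairwise (Function.onFun Disjoint
        fun σ : Equiv.Perm (Fin K) => R ⁻¹' {fun k => (σ k).val + 1} ∩ S ⁻¹' A) := by
      intro σ σ' hne
      refine Set.disjoint_left.2 fun ω hω hω' => ?_
      exact hne (hρinj (hω.1.symm.trans hω'.1 : _))
    calc P (S ⁻¹' A) = P (S ⁻¹' A ∩ U) := (measure_inter_conull hUc).symm
      _ = ∑' σ : Equiv.Perm (Fin K), P (R ⁻¹' {fun k => (σ k).val + 1} ∩ S ⁻¹' A) := by
          rw [hSU]
          exact measure_iUnion hdisj fun σ =>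
            (hRmeas (measurableSet_singleton _)).inter (hSmeas hA)
      _ = ∑' _ : Equiv.Perm (Fin K), P (R ⁻¹' {fun k : Fin K => (k : ℕ) + 1} ∩ S ⁻¹' A) := by
          refine tsum_congr fun σ => ?_
          exact hq A hA (fun k : Fin K => (k : ℕ) + 1) σ
      _ = (Fintype.card (Equiv.Perm (Fin K)) : ℝ≥0∞)
            * P (R ⁻¹' {fun k : Fin K => (k : ℕ) + 1} ∩ S ⁻¹' A) := by
          rw [tsum_fintype]
          simp [Finset.sum_const, nsmul_eq_mul]
  -- the key pointwise identity
  have hmain : ∀ (A : Set (EuclideanSpace ℝ (Fin p))), MeasurableSet A → ∀ ρ : Fin K → ℕ,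
      P (R ⁻¹' {ρ} ∩ S ⁻¹' A) = P (R ⁻¹' {ρ}) * P (S ⁻¹' A) := by
    intro A hA ρ
    by_cases hρ : ∃ σ : Equiv.Perm (Fin K), ρ = fun k => (σ k).val + 1
    · obtain ⟨σ, rfl⟩ := hρ
      have h1 : P (R ⁻¹' {fun k => (σ k).val + 1} ∩ S ⁻¹' A)
          = P (R ⁻¹' {fun k : Fin K => (k : ℕ) + 1} ∩ S ⁻¹' A) :=
        hq A hA (fun k : Fin K => (k : ℕ) + 1) σ
      have h2 : P (R ⁻¹' {fun k => (σ k).val + 1})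
          = P (R ⁻¹' {fun k : Fin K => (k : ℕ) + 1}) := by
        have := hq Set.univ MeasurableSet.univ (fun k : Fin K => (k : ℕ) + 1) σ
        simpa using this
      have hAc := hcount A hA
      have hUc' := hcount Set.univ MeasurableSet.univ
      simp only [Set.preimage_univ, Set.inter_univ, measure_univ] at hUc'
      set c := (Fintype.card (Equiv.Perm (Fin K)) : ℝ≥0∞) with hc
      set qA := P (R ⁻¹' {fun k : Fin K => (k : ℕ) + 1} ∩ S ⁻¹' A) with hqA
      set qU := P (R ⁻¹' {fun k : Fin K => (k : ℕ) + 1}) with hqU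
      rw [h1, h2]
      -- goal: qA = qU * P (S ⁻¹' A), given hAc : P (S⁻¹' A) = c * qA, hUc' : 1 = c * qU
      have : qU * P (S ⁻¹' A) = qU * (c * qA) := by rw [hAc]
      rw [this, ← mul_assoc, mul_comm qU c, ← hUc', one_mul]
    · have hz : P (R ⁻¹' {ρ}) = 0 := by
        refine measure_mono_null ?_ hbad
        intro ω hω hcon
        obtain ⟨e, he⟩ := exists_perm_rankVec hcon
        exact hρ ⟨e, by rw [← Set.mem_singleton_iff.1 hω]; exact funext he⟩
      rw [hz, zero_mul]
      exact measure_mono_null Set.inter_subset_left hz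
  -- conclude
  rw [indepFun_iff_measure_inter_preimage_eq_mul]
  intro s A hs hA
  have hdecomp : ∀ (C : Set Ω), MeasurableSet C →
      P (R ⁻¹' s ∩ C) = ∑' ρ : s, P (R ⁻¹' {(ρ : Fin K → ℕ)} ∩ C) := by
    intro C hC
    have hunion : R ⁻¹' s ∩ C = ⋃ ρ : s, (R ⁻¹' {(ρ : Fin K → ℕ)} ∩ C) := by
      ext ω
      simp only [Set.mem_inter_iff, Set.mem_preimage, Set.mem_iUnion, Set.mem_singleton_iff]
      constructor
      · rintro ⟨h1, h2⟩
        exact ⟨⟨R ω, h1⟩, rfl, h2⟩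
      · rintro ⟨ρ, hρ, h2⟩
        exact ⟨hρ ▸ ρ.2, h2⟩
    rw [hunion]
    refine measure_iUnion ?_ fun ρ => (hRmeas (measurableSet_singleton _)).inter hC
    intro ρ ρ' hne
    refine Set.disjoint_left.2 fun ω hω hω' => ?_
    exact hne (Subtype.ext (hω.1.symm.trans hω'.1 : _))
  have hRs : P (R ⁻¹' s) = ∑' ρ : s, P (R ⁻¹' {(ρ : Fin K → ℕ)}) := by
    have := hdecomp Set.univ MeasurableSet.univ
    simpa using this
  rw [hdecomp (S ⁻¹' A) (hSmeas hA), hRs]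
  rw [← ENNReal.tsum_mul_right]
  exact tsum_congr fun ρ => hmain A hA (ρ : Fin K → ℕ)
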